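/- arXiv:2008.03643 — 3 statements merged into one kernel-verified Lean document; each statement's English description precedes it below -/
import Mathlib

section
/- If a map of triangles of the form (1_X, g, h), from a distinguished triangle X →u Y →v Z →w ΣX to a distinguished triangle X →u' Y' →v' Z' →w' ΣX with identity first component, is good, then it is Verdier good. -/
open CategoryTheory Category Limits Pretriangulated

universe v u

variable {C : Type u} [Category.{v} C] [Preadditive C] [HasZeroObject C]
  [HasShift C ℤ] [∀ n : ℤ, (shiftFunctor C n).Additive] [Pretriangulated C]
  [IsTriangulated C] [HasBinaryBiproducts C]

noncomputable local instance (n : ℤ) : PreservesBinaryBiproducts (shiftFunctor C n) :=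
  preservesBinaryBiproducts_of_preservesBiproducts _

set_option maxHeartbeats 1000000

/-- The canonical iso between a binary biproduct and a product over `WalkingPair`. -/
noncomputable def biprodPiIso (F : WalkingPair → C) [HasProduct F] :
    F WalkingPair.left ⊞ F WalkingPair.right ≅ ∏ᶜ F where
  hom := Pi.lift (fun j => match j with
    | WalkingPair.left => biprod.fst
    | WalkingPair.right => biprod.snd)
  inv := biprod.lift (Pi.π F WalkingPair.left) (Pi.π F WalkingPair.right)
  hom_inv_id := by apply biprod.hom_ext <;> simp
  inv_hom_id := by apply limit.hom_ext; rintro ⟨(_ | _)⟩ <;> simp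

lemma mapBiprod_inv_map_fst (A B : C) : ((shiftFunctor C (1 : ℤ)).mapBiprod A B).inv ≫
    (shiftFunctor C (1 : ℤ)).map (biprod.fst : A ⊞ B ⟶ A) = biprod.fst := by
  rw [Iso.inv_comp_eq]; simp [Functor.mapBiprod_hom]; exact (biprod.lift_fst _ _).symm

lemma mapBiprod_inv_map_snd (A B : C) : ((shiftFunctor C (1 : ℤ)).mapBiprod A B).inv ≫
    (shiftFunctor C (1 : ℤ)).map (biprod.snd : A ⊞ B ⟶ B) = biprod.snd := by
  rw [Iso.inv_comp_eq]; simp [Functor.mapBiprod_hom]; exact (biprod.lift_snd _ _).symm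

lemma binarySum_distinguished (T₁ T₂ : Triangle C)
    (h₁ : T₁ ∈ distTriang C) (h₂ : T₂ ∈ distTriang C) :
    Triangle.mk (biprod.map T₁.mor₁ T₂.mor₁) (biprod.map T₁.mor₂ T₂.mor₂)
      (biprod.map T₁.mor₃ T₂.mor₃ ≫
        ((shiftFunctor C (1 : ℤ)).mapBiprod T₁.obj₁ T₂.obj₁).inv) ∈ distTriang C := by
  let T : WalkingPair → Triangle C := fun j => match j with
    | WalkingPair.left => T₁
    | WalkingPair.right => T₂
  have hT : ∀ j, T j ∈ distTriang C := by rintro (_ | _); exacts [h₁, h₂]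
  refine isomorphic_distinguished _ (productTriangle_distinguished T hT) _ ?_
  refine Triangle.isoMk _ _ (biprodPiIso (fun j => (T j).obj₁))
    (biprodPiIso (fun j => (T j).obj₂)) (biprodPiIso (fun j => (T j).obj₃)) ?_ ?_ ?_
  · apply limit.hom_ext; rintro ⟨(_ | _)⟩ <;> simp [biprodPiIso, T, Triangle.mk, productTriangle]
  · apply limit.hom_ext; rintro ⟨(_ | _)⟩ <;> simp [biprodPiIso, T, Triangle.mk, productTriangle]
  · simp only [Triangle.mk, productTriangle]
    rw [← cancel_mono (piComparison (shiftFunctor C (1 : ℤ)) (fun j => (T j).obj₁))]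
    simp only [assoc, IsIso.inv_hom_id, comp_id]
    apply limit.hom_ext; rintro ⟨(_ | _)⟩
    · simp only [assoc, piComparison_comp_π, ← Functor.map_comp, biprodPiIso, Pi.lift_π]
      rw [mapBiprod_inv_map_fst]
      simp [T]
    · simp only [assoc, piComparison_comp_π, ← Functor.map_comp, biprodPiIso, Pi.lift_π]
      rw [mapBiprod_inv_map_snd]
      simp [T]

set_option linter.unusedSectionVars false
open ZeroObject

/-- Shearing automorphism of a binary biproduct. -/
@[simps]
noncomputable def shearIso (A B : C) (t : A ⟶ B) : A ⊞ B ≅ A ⊞ B where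
  hom := 𝟙 _ + biprod.fst ≫ t ≫ biprod.inr
  inv := 𝟙 _ - biprod.fst ≫ t ≫ biprod.inr
  hom_inv_id := by
    simp only [Preadditive.comp_sub, Preadditive.add_comp, id_comp, comp_id, assoc,
      biprod.inr_fst_assoc, zero_comp, comp_zero]
    abel
  inv_hom_id := by
    simp only [Preadditive.comp_add, Preadditive.sub_comp, id_comp, comp_id, assoc,
      biprod.inr_fst_assoc, zero_comp, comp_zero]
    abel

lemma isIso_inr_zero_left (A : C) : IsIso (biprod.inr : A ⟶ (0 : C) ⊞ A) := by
  refine ⟨biprod.snd, by simp, ?_⟩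
  apply biprod.hom_ext
  · exact (isZero_zero C).eq_of_tgt _ _
  · simp

lemma isIso_of_isIso_biprodMap {A B E : C} (ζ : A ⟶ B)
    (h : IsIso (biprod.map ζ (𝟙 E))) : IsIso ζ := by
  refine ⟨biprod.inl ≫ inv (biprod.map ζ (𝟙 E)) ≫ biprod.fst, ?_, ?_⟩
  · have : ζ ≫ biprod.inl = biprod.inl ≫ biprod.map ζ (𝟙 E) := by simp
    rw [← assoc, this, assoc, IsIso.hom_inv_id_assoc, biprod.inl_fst]
  · have : biprod.fst ≫ ζ = biprod.map ζ (𝟙 E) ≫ biprod.fst := by simp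
    rw [assoc, assoc, this, IsIso.inv_hom_id_assoc, biprod.inl_fst]

/-- The condition that `(f, g, h)` is a morphism of triangles from `T` to `T'`. -/
def IsTriMap (T T' : Triangle C) (f : T.obj₁ ⟶ T'.obj₁) (g : T.obj₂ ⟶ T'.obj₂)
    (h : T.obj₃ ⟶ T'.obj₃) : Prop :=
  T.mor₁ ≫ g = f ≫ T'.mor₁ ∧ T.mor₂ ≫ h = g ≫ T'.mor₂ ∧
    T.mor₃ ≫ f⟦(1 : ℤ)⟧' = h ≫ T'.mor₃

/-- The mapping cone of a morphism of triangles. -/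
noncomputable def mappingCone (T T' : Triangle C) (f : T.obj₁ ⟶ T'.obj₁)
    (g : T.obj₂ ⟶ T'.obj₂) (h : T.obj₃ ⟶ T'.obj₃) : Triangle C :=
  Triangle.mk
    (biprod.desc (biprod.lift T'.mor₁ 0) (biprod.lift g (-T.mor₂)) :
      T'.obj₁ ⊞ T.obj₂ ⟶ T'.obj₂ ⊞ T.obj₃)
    (biprod.desc (biprod.lift T'.mor₂ 0) (biprod.lift h (-T.mor₃)) :
      T'.obj₂ ⊞ T.obj₃ ⟶ T'.obj₃ ⊞ T.obj₁⟦(1 : ℤ)⟧)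
    (biprod.desc (biprod.lift T'.mor₃ 0)
        (biprod.lift (f⟦(1 : ℤ)⟧') (-(T.mor₁⟦(1 : ℤ)⟧'))) ≫
      ((shiftFunctor C (1 : ℤ)).mapBiprod T'.obj₁ T.obj₂).inv)

/-- A morphism of triangles is good if its mapping cone is distinguished. -/
noncomputable def IsGood (T T' : Triangle C) (f : T.obj₁ ⟶ T'.obj₁)
    (g : T.obj₂ ⟶ T'.obj₂) (h : T.obj₃ ⟶ T'.obj₃) : Prop :=
  mappingCone T T' f g h ∈ distTriang C

/-- An octahedron on composable maps `a`, `b`, given distinguished triangles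
`(a, p₁, q₁)`, `(b, p₂, q₂)` and `(a ≫ b, p₃, q₃)`, is a pair `(m, n)` as below. -/
def IsOctahedron {A₁ A₂ A₃ B₁ B₂ B₃ : C} (a : A₁ ⟶ A₂) (b : A₂ ⟶ A₃)
    (p₁ : A₂ ⟶ B₁) (q₁ : B₁ ⟶ A₁⟦(1 : ℤ)⟧)
    (p₂ : A₃ ⟶ B₂) (q₂ : B₂ ⟶ A₂⟦(1 : ℤ)⟧)
    (p₃ : A₃ ⟶ B₃) (q₃ : B₃ ⟶ A₁⟦(1 : ℤ)⟧)
    (m : B₁ ⟶ B₃) (n : B₃ ⟶ B₂) : Prop :=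
  p₁ ≫ m = b ≫ p₃ ∧ m ≫ q₃ = q₁ ∧ p₃ ≫ n = p₂ ∧ n ≫ q₂ = q₃ ≫ a⟦(1 : ℤ)⟧' ∧
    (Triangle.mk m n (q₂ ≫ p₁⟦(1 : ℤ)⟧') ∈ distTriang C)

/-- A morphism of triangles `(f, g, h)` is Verdier good if `h` arises from Verdier's
construction via two octahedra on the composite `g ∘ u = u' ∘ f`. -/
def IsVerdierGood (T T' : Triangle C) (f : T.obj₁ ⟶ T'.obj₁) (g : T.obj₂ ⟶ T'.obj₂)
    (h : T.obj₃ ⟶ T'.obj₃) : Prop :=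
  ∃ (A Y'' X'' : C) (vt : T'.obj₂ ⟶ A) (wt : A ⟶ T.obj₁⟦(1 : ℤ)⟧)
    (g' : T'.obj₂ ⟶ Y'') (g'' : Y'' ⟶ T.obj₂⟦(1 : ℤ)⟧)
    (f' : T'.obj₁ ⟶ X'') (f'' : X'' ⟶ T.obj₁⟦(1 : ℤ)⟧)
    (α₁ : T.obj₃ ⟶ A) (β₁ : A ⟶ Y'') (α₂ : X'' ⟶ A) (β₂ : A ⟶ T'.obj₃),
    (Triangle.mk (T.mor₁ ≫ g) vt wt ∈ distTriang C) ∧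
    (Triangle.mk g g' g'' ∈ distTriang C) ∧
    (Triangle.mk f f' f'' ∈ distTriang C) ∧
    IsOctahedron T.mor₁ g T.mor₂ T.mor₃ g' g'' vt wt α₁ β₁ ∧
    IsOctahedron f T'.mor₁ f' f'' T'.mor₂ T'.mor₃ vt wt α₂ β₂ ∧
    h = α₁ ≫ β₂

/-- The morphism of triangles `(f, g, h)` is nullhomotopic, in the (equivalent)
`Σ`-applied formulation of the first equation. -/
def IsNullHomotopic (T T' : Triangle C) (f : T.obj₁ ⟶ T'.obj₁) (g : T.obj₂ ⟶ T'.obj₂)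
    (h : T.obj₃ ⟶ T'.obj₃) : Prop :=
  ∃ (F : T.obj₂ ⟶ T'.obj₁) (G : T.obj₃ ⟶ T'.obj₂) (H : T.obj₁⟦(1 : ℤ)⟧ ⟶ T'.obj₃),
    f⟦(1 : ℤ)⟧' = T.mor₁⟦(1 : ℤ)⟧' ≫ F⟦(1 : ℤ)⟧' + H ≫ T'.mor₃ ∧
    g = T.mor₂ ≫ G + F ≫ T'.mor₁ ∧
    h = T.mor₃ ≫ H + G ≫ T'.mor₂

/-- A triangle is contractible if its identity morphism is nullhomotopic. -/
def IsContractible (T : Triangle C) : Prop :=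
  IsNullHomotopic T T (𝟙 T.obj₁) (𝟙 T.obj₂) (𝟙 T.obj₃)

/-- A morphism of triangles is middling good if it extends to a 4 × 4 diagram. -/
def IsMiddlingGood (T T' : Triangle C) (f : T.obj₁ ⟶ T'.obj₁) (g : T.obj₂ ⟶ T'.obj₂)
    (h : T.obj₃ ⟶ T'.obj₃) : Prop :=
  ∃ (X'' Y'' Z'' : C)
    (f' : T'.obj₁ ⟶ X'') (f'' : X'' ⟶ T.obj₁⟦(1 : ℤ)⟧)
    (g' : T'.obj₂ ⟶ Y'') (g'' : Y'' ⟶ T.obj₂⟦(1 : ℤ)⟧)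
    (h' : T'.obj₃ ⟶ Z'') (h'' : Z'' ⟶ T.obj₃⟦(1 : ℤ)⟧)
    (u'' : X'' ⟶ Y'') (v'' : Y'' ⟶ Z'') (w'' : Z'' ⟶ X''⟦(1 : ℤ)⟧),
    (Triangle.mk f f' f'' ∈ distTriang C) ∧
    (Triangle.mk g g' g'' ∈ distTriang C) ∧
    (Triangle.mk h h' h'' ∈ distTriang C) ∧
    (Triangle.mk u'' v'' w'' ∈ distTriang C) ∧
    T'.mor₁ ≫ g' = f' ≫ u'' ∧
    T'.mor₂ ≫ h' = g' ≫ v'' ∧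
    T'.mor₃ ≫ f'⟦(1 : ℤ)⟧' = h' ≫ w'' ∧
    u'' ≫ g'' = f'' ≫ T.mor₁⟦(1 : ℤ)⟧' ∧
    v'' ≫ h'' = g'' ≫ T.mor₂⟦(1 : ℤ)⟧' ∧
    h'' ≫ T.mor₃⟦(1 : ℤ)⟧' = -(w'' ≫ f''⟦(1 : ℤ)⟧')

/-- A candidate triangle `(a, b, c)` is replaceably exact if each of its three maps
can be replaced to give a distinguished triangle. -/
def ReplaceablyExact {A B D : C} (a : A ⟶ B) (b : B ⟶ D) (c : D ⟶ A⟦(1 : ℤ)⟧) : Prop :=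
  (∃ a' : A ⟶ B, Triangle.mk a' b c ∈ distTriang C) ∧
  (∃ b' : B ⟶ D, Triangle.mk a b' c ∈ distTriang C) ∧
  (∃ c' : D ⟶ A⟦(1 : ℤ)⟧, Triangle.mk a b c' ∈ distTriang C)

theorem stmt_13 {X Y Z Y' Z' : C}
    (u : X ⟶ Y) (v : Y ⟶ Z) (w : Z ⟶ X⟦(1 : ℤ)⟧)
    (u' : X ⟶ Y') (v' : Y' ⟶ Z') (w' : Z' ⟶ X⟦(1 : ℤ)⟧)
    (hT : Triangle.mk u v w ∈ distTriang C)
    (hT' : Triangle.mk u' v' w' ∈ distTriang C)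
    (g : Y ⟶ Y') (h : Z ⟶ Z')
    (hmap : IsTriMap (Triangle.mk u v w) (Triangle.mk u' v' w') (𝟙 X) g h)
    (hgood : IsGood (Triangle.mk u v w) (Triangle.mk u' v' w') (𝟙 X) g h) :
    IsVerdierGood (Triangle.mk u v w) (Triangle.mk u' v' w') (𝟙 X) g h := by
  have hu : u ≫ g = u' := by simpa [Triangle.mk] using hmap.1
  have hv : v ≫ h = g ≫ v' := hmap.2.1
  have hw : h ≫ w' = w := by simpa [Triangle.mk] using hmap.2.2.symm
  have huv : u ≫ v = 0 := comp_distTriang_mor_zero₁₂ _ hT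
  have hu'v' : u' ≫ v' = 0 := comp_distTriang_mor_zero₁₂ _ hT'
  have hv'w' : v' ≫ w' = 0 := comp_distTriang_mor_zero₂₃ _ hT'
  set R := (shiftFunctor C (1 : ℤ)).mapBiprod X Y with hRdef
  -- Step B : the "homotopy pushout" triangle is distinguished
  have hTB : Triangle.mk (biprod.lift g (-v)) (biprod.desc v' h) (w' ≫ u⟦(1 : ℤ)⟧')
      ∈ distTriang C := by
    -- the mapping cone, after a change of basis
    have hT'' : Triangle.mk
        (biprod.desc (0 : X ⟶ Y' ⊞ Z) (biprod.lift g (-v)))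
        (biprod.desc (biprod.lift v' (0 : Y' ⟶ X⟦(1 : ℤ)⟧)) (biprod.lift h 0))
        (biprod.desc (biprod.lift (0 : Z' ⟶ X⟦(1 : ℤ)⟧) (w' ≫ u⟦(1 : ℤ)⟧'))
          (biprod.lift (𝟙 (X⟦(1 : ℤ)⟧)) 0) ≫ R.inv) ∈ distTriang C := by
      refine isomorphic_distinguished _ hgood _ ?_
      have hRf : R.inv ≫ (shiftFunctor C (1 : ℤ)).map (biprod.fst : X ⊞ Y ⟶ X) =
          biprod.fst := by
        rw [Iso.inv_comp_eq]; simp [hRdef, Functor.mapBiprod_hom]; exact (biprod.lift_fst _ _).symm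
      have hRi : (shiftFunctor C (1 : ℤ)).map (biprod.inr : Y ⟶ X ⊞ Y) ≫ R.hom =
          biprod.inr := by
        apply biprod.hom_ext <;>
          simp [hRdef, Functor.mapBiprod_hom, ← Functor.map_comp]
        · exact (assoc _ _ _).trans ((congrArg (fun k => _ ≫ k) (biprod.lift_fst _ _)).trans
            (by rw [← Functor.map_comp, biprod.inr_fst, Functor.map_zero]))
        · exact (assoc _ _ _).trans ((congrArg (fun k => _ ≫ k) (biprod.lift_snd _ _)).trans
            (by rw [← Functor.map_comp, biprod.inr_snd, CategoryTheory.Functor.map_id]))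
      have hconj : R.inv ≫ (shiftFunctor C (1 : ℤ)).map
            (𝟙 (X ⊞ Y) + biprod.fst ≫ (-u) ≫ biprod.inr) ≫ R.hom =
          𝟙 _ + biprod.fst ≫ ((-u)⟦(1 : ℤ)⟧') ≫ biprod.inr := by
        simp only [Functor.map_add, CategoryTheory.Functor.map_id, Functor.map_comp,
          Preadditive.comp_add, Preadditive.add_comp, id_comp, comp_id, assoc,
          Iso.inv_hom_id, reassoc_of% hRf]
        rw [hRi]
      refine Triangle.isoMk _ _ (shearIso X Y (-u)) (Iso.refl _)
        (shearIso Z' (X⟦(1 : ℤ)⟧) (-w')) ?_ ?_ ?_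
      · apply biprod.hom_ext' <;> apply biprod.hom_ext <;>
          simp [shearIso, mappingCone, hu, huv, Triangle.mk]
      · apply biprod.hom_ext' <;> apply biprod.hom_ext <;>
          simp [shearIso, mappingCone, hw, hv'w', Triangle.mk]
      · simp only [mappingCone, Triangle.mk, shearIso_hom, Iso.refl_hom]
        rw [← hRdef, ← cancel_mono R.hom]
        simp only [assoc, Iso.inv_hom_id, comp_id]
        rw [hconj]
        apply biprod.hom_ext' <;> apply biprod.hom_ext <;>
          simp [shearIso, ← Functor.map_comp]
    obtain ⟨W, p, q, hW⟩ := distinguished_cocone_triangle (biprod.lift g (-v))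
    have hsum : Triangle.mk (biprod.map (0 : X ⟶ 0) (biprod.lift g (-v))) (biprod.map 0 p)
        (biprod.map (𝟙 (X⟦(1 : ℤ)⟧)) q ≫ R.inv) ∈ distTriang C := binarySum_distinguished
      (Triangle.mk (0 : X ⟶ 0) (0 : (0 : C) ⟶ X⟦(1 : ℤ)⟧) (𝟙 (X⟦(1 : ℤ)⟧)))
      (Triangle.mk (biprod.lift g (-v)) p q)
      (contractible_distinguished₂ X) hW
    have hcomm : (biprod.desc (0 : X ⟶ Y' ⊞ Z) (biprod.lift g (-v))) ≫
        (biprod.inr : Y' ⊞ Z ⟶ (0 : C) ⊞ (Y' ⊞ Z)) =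
        𝟙 (X ⊞ Y) ≫ biprod.map (0 : X ⟶ (0 : C)) (biprod.lift g (-v)) := by
      apply biprod.hom_ext' <;> apply biprod.hom_ext <;> simp
    obtain ⟨φ, hφ₂, hφ₃⟩ : ∃ φ : Z' ⊞ X⟦(1 : ℤ)⟧ ⟶ X⟦(1 : ℤ)⟧ ⊞ W, _ :=
      complete_distinguished_triangle_morphism _ _ hT'' hsum
      (𝟙 (X ⊞ Y)) biprod.inr hcomm
    simp only [Triangle.mk] at hφ₂ hφ₃
    haveI := isIso_inr_zero_left (Y' ⊞ Z)
    haveI : IsIso φ := by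
      refine isIso₃_of_isIso₁₂ (Triangle.homMk _ _ (𝟙 (X ⊞ Y)) biprod.inr φ
        (by exact hcomm) (by exact hφ₂) (by exact hφ₃)) hT'' hsum ?_ ?_
      · exact (inferInstance : IsIso (𝟙 (X ⊞ Y)))
      · exact isIso_inr_zero_left _
    set ζ : Z' ⟶ W := biprod.inl ≫ φ ≫ biprod.snd with hζdef
    set a : X⟦(1 : ℤ)⟧ ⟶ W := biprod.inr ≫ φ ≫ biprod.snd with hadef
    -- second-square components
    have h1 : biprod.desc v' h ≫ ζ = p := by
      have e2 : biprod.desc (biprod.lift v' (0 : Y' ⟶ X⟦(1 : ℤ)⟧)) (biprod.lift h 0) =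
          biprod.desc v' h ≫ biprod.inl := by
        apply biprod.hom_ext' <;> apply biprod.hom_ext <;> simp
      rw [e2, assoc] at hφ₂
      have := hφ₂ =≫ (biprod.snd : X⟦(1 : ℤ)⟧ ⊞ W ⟶ W)
      simpa [hζdef] using this
    -- third-square components
    have hφ₃' : biprod.desc (biprod.lift (0 : Z' ⟶ X⟦(1 : ℤ)⟧) (w' ≫ u⟦(1 : ℤ)⟧'))
        (biprod.lift (𝟙 (X⟦(1 : ℤ)⟧)) 0) ≫ R.inv =
        φ ≫ biprod.map (𝟙 (X⟦(1 : ℤ)⟧)) q ≫ R.inv := by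
      simpa using hφ₃
    have h3 : biprod.inl ≫ φ ≫ biprod.map (𝟙 (X⟦(1 : ℤ)⟧)) q =
        biprod.lift (0 : Z' ⟶ X⟦(1 : ℤ)⟧) (w' ≫ u⟦(1 : ℤ)⟧') := by
      rw [← cancel_mono R.inv]
      have := (biprod.inl : Z' ⟶ Z' ⊞ X⟦(1 : ℤ)⟧) ≫= hφ₃'
      simpa using this.symm
    have h4 : biprod.inr ≫ φ ≫ biprod.map (𝟙 (X⟦(1 : ℤ)⟧)) q =
        biprod.lift (𝟙 (X⟦(1 : ℤ)⟧)) 0 := by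
      rw [← cancel_mono R.inv]
      have := (biprod.inr : X⟦(1 : ℤ)⟧ ⟶ Z' ⊞ X⟦(1 : ℤ)⟧) ≫= hφ₃'
      simpa using this.symm
    have hζq : ζ ≫ q = w' ≫ u⟦(1 : ℤ)⟧' := by
      have := h3 =≫ (biprod.snd : X⟦(1 : ℤ)⟧ ⊞ Y⟦(1 : ℤ)⟧ ⟶ Y⟦(1 : ℤ)⟧)
      simpa [hζdef] using this
    have hc0 : biprod.inl ≫ φ ≫ biprod.fst = (0 : Z' ⟶ X⟦(1 : ℤ)⟧) := by
      have := h3 =≫ (biprod.fst : X⟦(1 : ℤ)⟧ ⊞ Y⟦(1 : ℤ)⟧ ⟶ X⟦(1 : ℤ)⟧)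
      simpa using this
    have hb1 : biprod.inr ≫ φ ≫ biprod.fst = 𝟙 (X⟦(1 : ℤ)⟧) := by
      have := h4 =≫ (biprod.fst : X⟦(1 : ℤ)⟧ ⊞ Y⟦(1 : ℤ)⟧ ⟶ X⟦(1 : ℤ)⟧)
      simpa using this
    -- ζ is an isomorphism
    have hφdec : φ ≫ (shearIso (X⟦(1 : ℤ)⟧) W (-a)).hom ≫
        (biprod.braiding (X⟦(1 : ℤ)⟧) W).hom = biprod.map ζ (𝟙 (X⟦(1 : ℤ)⟧)) := by
      apply biprod.hom_ext' <;> apply biprod.hom_ext <;>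
        simp [shearIso, hζdef, hadef, reassoc_of% hc0, reassoc_of% hb1, hc0, hb1]
    haveI : IsIso (biprod.map ζ (𝟙 (X⟦(1 : ℤ)⟧))) := by
      rw [← hφdec]; infer_instance
    haveI hζiso : IsIso ζ := isIso_of_isIso_biprodMap _ this
    refine isomorphic_distinguished _ hW _ ?_
    exact Triangle.isoMk _ _ (Iso.refl _) (Iso.refl _) (@asIso _ _ _ _ ζ hζiso) (by simp [Triangle.mk])
      (by simpa [Triangle.mk] using h1) (by simpa [Triangle.mk] using hζq.symm)
  -- choose a cone on g
  obtain ⟨Y'', g', g'', hg⟩ := distinguished_cocone_triangle g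
  -- the split triangle on biprod.fst
  have hsnd : Triangle.mk (biprod.fst : Y' ⊞ Z ⟶ Y') (0 : Y' ⟶ Z⟦(1 : ℤ)⟧)
      (-(biprod.inr : Z ⟶ Y' ⊞ Z)⟦(1 : ℤ)⟧') ∈ distTriang C := by
    refine isomorphic_distinguished _
      (rot_of_distTriang _ (binaryBiproductTriangle_distinguished Z Y')) _ ?_
    have hbr : (biprod.inr : Z ⟶ Y' ⊞ Z) ≫ biprod.lift biprod.snd biprod.fst =
        (biprod.inl : Z ⟶ Z ⊞ Y') := by apply biprod.hom_ext <;> simp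
    exact Triangle.isoMk _ _ (biprod.braiding Y' Z) (Iso.refl _) (Iso.refl _)
      (by simp [Triangle.mk, binaryBiproductTriangle, Triangle.rotate])
      (by simp [Triangle.mk, binaryBiproductTriangle, Triangle.rotate])
      (by simp only [Triangle.mk, binaryBiproductTriangle, Triangle.rotate]; dsimp; rw [id_comp, Preadditive.neg_comp, ← Functor.map_comp]; exact congrArg (fun k => -(shiftFunctor C (1 : ℤ)).map k) hbr)
  -- the octahedron
  let oct := Triangulated.someOctahedron (u₁₂ := biprod.lift g (-v))
    (u₂₃ := (biprod.fst : Y' ⊞ Z ⟶ Y')) (u₁₃ := g) (by simp) hTB hsnd hg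
  have hβv : v' ≫ oct.m₁ = g' := by
    have e := oct.comm₁
    calc v' ≫ oct.m₁ = biprod.inl ≫ biprod.desc v' h ≫ oct.m₁ := by simp
    _ = biprod.inl ≫ (biprod.fst : Y' ⊞ Z ⟶ Y') ≫ g' := by rw [e]
    _ = g' := by simp
  have hm₃ : oct.m₃ = g'' ≫ v⟦(1 : ℤ)⟧' := by
    have e := oct.comm₄ =≫ ((biprod.snd : Y' ⊞ Z ⟶ Z)⟦(1 : ℤ)⟧')
    simp only [assoc, ← Functor.map_comp, Preadditive.neg_comp, biprod.lift_snd,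
      biprod.inr_snd, Functor.map_neg, Preadditive.comp_neg] at e
    rw [CategoryTheory.Functor.map_id, comp_id] at e
    rw [← neg_inj]
    exact e.symm
  have hdist : Triangle.mk h oct.m₁ (g'' ≫ v⟦(1 : ℤ)⟧') ∈ distTriang C := by
    rw [Pretriangulated.rotate_distinguished_triangle]
    refine isomorphic_distinguished _ oct.mem _ ?_
    exact Triangle.isoMk _ _ (Iso.refl _) (Iso.refl _) (Iso.refl _)
      (by simp [Triangle.mk, Triangle.rotate]) (by simp [hm₃, Triangle.mk, Triangle.rotate])
      (by simp [← Functor.map_comp, Triangle.mk, Triangle.rotate])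
  refine ⟨Z', Y'', 0, v', w', g', g'', 0, 0, h, oct.m₁, 0, 𝟙 Z', ?_, hg, ?_,
    ⟨hv, hw, hβv, oct.comm₂, hdist⟩, ⟨?_, ?_, ?_, ?_, ?_⟩, (comp_id h).symm⟩
  · simp only [Triangle.mk]
    rw [hu]
    exact hT'
  · exact contractible_distinguished X
  · simp [hu'v', Triangle.mk]; exact zero_comp
  · simp [Triangle.mk]; rfl
  · simp [Triangle.mk]
  · simp [Triangle.mk]
  · simp only [Triangle.mk, Functor.map_zero, comp_zero]
    convert contractible_distinguished₁ Z' using 1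
    exact congrArg (fun k : Z' ⟶ (0 : C)⟦(1 : ℤ)⟧ => Triangle.mk (0 : (0 : C) ⟶ Z') (𝟙 Z') k)
      ((congrArg (fun k => w' ≫ k) ((shiftFunctor C (1 : ℤ)).map_zero _ _)).trans comp_zero)
end

section
/- Let (0, g, h) be a map of triangles from a distinguished triangle X →u Y →v Z →w ΣX to a distinguished triangle X' →u' Y' →v' Z' →w' ΣX' whose first component is the zero morphism. Then (0, g, h) is nullhomotopic if and only if there exists a morphism G: Z→Y' with g = G∘v and h = v'∘G (i.e., it is nullhomotopic via a chain homotopy of the form (0, G, 0)). -/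
open CategoryTheory Category Limits Pretriangulated

universe v u

variable {C : Type u} [Category.{v} C] [Preadditive C] [HasZeroObject C]
  [HasShift C ℤ] [∀ n : ℤ, (shiftFunctor C n).Additive] [Pretriangulated C]
  [IsTriangulated C] [HasBinaryBiproducts C]

theorem stmt_14 {X Y Z X' Y' Z' : C}
    (u : X ⟶ Y) (v : Y ⟶ Z) (w : Z ⟶ X⟦(1 : ℤ)⟧)
    (u' : X' ⟶ Y') (v' : Y' ⟶ Z') (w' : Z' ⟶ X'⟦(1 : ℤ)⟧)
    (hT : Triangle.mk u v w ∈ distTriang C)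
    (hT' : Triangle.mk u' v' w' ∈ distTriang C)
    (g : Y ⟶ Y') (h : Z ⟶ Z')
    (hmap : IsTriMap (Triangle.mk u v w) (Triangle.mk u' v' w') 0 g h) :
    IsNullHomotopic (Triangle.mk u v w) (Triangle.mk u' v' w') 0 g h ↔
      ∃ G : Z ⟶ Y', g = v ≫ G ∧ h = G ≫ v' := by
  obtain ⟨hgu, hhv, hhw⟩ := hmap
  change u ≫ g = 0 ≫ u' at hgu
  change v ≫ h = g ≫ v' at hhv
  change w ≫ (0 : X ⟶ X')⟦(1 : ℤ)⟧' = h ≫ w' at hhw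
  constructor
  · intro hN
    obtain ⟨F, G, H, h1, h2, h3⟩ : ∃ (F : Y ⟶ X') (G : Z ⟶ Y') (H : X⟦(1 : ℤ)⟧ ⟶ Z'),
        (0 : X ⟶ X')⟦(1 : ℤ)⟧' = u⟦(1 : ℤ)⟧' ≫ F⟦(1 : ℤ)⟧' + H ≫ w' ∧
        g = v ≫ G + F ≫ u' ∧ h = w ≫ H + G ≫ v' := hN
    rw [Functor.map_zero] at h1
    have hgu0 : u ≫ g = 0 := by simpa using hgu
    have huv : u ≫ v = 0 := comp_distTriang_mor_zero₁₂ _ hT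
    have hvw : v ≫ w = 0 := comp_distTriang_mor_zero₂₃ _ hT
    have huF : u ≫ (F ≫ u') = 0 := by
      have h4 := hgu0
      rw [h2, Preadditive.comp_add, ← Category.assoc, huv, zero_comp, zero_add] at h4
      exact h4
    obtain ⟨δ, hδ⟩ : ∃ δ : Z ⟶ Y', F ≫ u' = v ≫ δ := Triangle.yoneda_exact₂ _ hT (F ≫ u') huF
    obtain ⟨K, hK1, hK2⟩ : ∃ K : X⟦(1 : ℤ)⟧ ⟶ Z', w ≫ K = δ ≫ v' ∧
        (-u⟦(1 : ℤ)⟧') ≫ F⟦(1 : ℤ)⟧' = K ≫ w' := complete_distinguished_triangle_morphism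
      ((Triangle.mk u v w).rotate) (Triangle.mk u' v' w')
      (rot_of_distTriang _ hT) hT' F δ (by change v ≫ δ = F ≫ u'; rw [← hδ])
    have hHK : (H - K) ≫ w' = 0 := by
      rw [Preadditive.sub_comp, ← hK2, Preadditive.neg_comp, sub_neg_eq_add, add_comm, ← h1]
    obtain ⟨ρ, hρ⟩ : ∃ ρ : X⟦(1 : ℤ)⟧ ⟶ Y', H - K = ρ ≫ v' :=
      Triangle.coyoneda_exact₃ _ hT' (H - K) hHK
    refine ⟨G + δ + w ≫ ρ, ?_, ?_⟩
    · rw [h2, hδ]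
      simp only [Preadditive.comp_add]
      rw [← Category.assoc, hvw, zero_comp, add_zero]
    · rw [h3]
      simp only [Preadditive.add_comp]
      rw [← hK1, Category.assoc, ← hρ, Preadditive.comp_sub]
      abel
  · rintro ⟨G, hg, hh⟩
    refine ⟨(0 : Y ⟶ X'), G, (0 : X⟦(1 : ℤ)⟧ ⟶ Z'), ?_, ?_, ?_⟩
    · change (0 : X ⟶ X')⟦(1 : ℤ)⟧' = u⟦(1 : ℤ)⟧' ≫ (0 : Y ⟶ X')⟦(1 : ℤ)⟧' + (0 : X⟦(1 : ℤ)⟧ ⟶ Z') ≫ w'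
      simp
    · change g = v ≫ G + (0 : Y ⟶ X') ≫ u'
      simp [hg.symm]
    · change h = w ≫ (0 : X⟦(1 : ℤ)⟧ ⟶ Z') + G ≫ v'
      simp [hh.symm]
end

section
/- Let X →u Y →v Z →w ΣX and X' →u' Y' →v' Z' →w' ΣX' be distinguished triangles. (i) A map of triangles of the form (0, 0, h) is nullhomotopic if and only if there exists θ: ΣX→Y' with h = v'∘θ∘w. (ii) A map of triangles of the form (0, g, 0) is nullhomotopic if and only if there exists θ: Z→X' with g = u'∘θ∘v. (iii) A map of triangles of the form (f, 0, 0) is nullhomotopic if and only if there exists θ: ΣY→Z' with Σf = w'∘θ∘(Σu). -/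
open CategoryTheory Category Limits Pretriangulated

universe v u

variable {C : Type u} [Category.{v} C] [Preadditive C] [HasZeroObject C]
  [HasShift C ℤ] [∀ n : ℤ, (shiftFunctor C n).Additive] [Pretriangulated C]
  [IsTriangulated C] [HasBinaryBiproducts C]

theorem stmt_15 {X Y Z X' Y' Z' : C}
    (u : X ⟶ Y) (v : Y ⟶ Z) (w : Z ⟶ X⟦(1 : ℤ)⟧)
    (u' : X' ⟶ Y') (v' : Y' ⟶ Z') (w' : Z' ⟶ X'⟦(1 : ℤ)⟧)
    (hT : Triangle.mk u v w ∈ distTriang C)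
    (hT' : Triangle.mk u' v' w' ∈ distTriang C) :
    (∀ h : Z ⟶ Z', IsTriMap (Triangle.mk u v w) (Triangle.mk u' v' w') 0 0 h →
      (IsNullHomotopic (Triangle.mk u v w) (Triangle.mk u' v' w') 0 0 h ↔ ∃ θ : X⟦(1 : ℤ)⟧ ⟶ Y', h = w ≫ θ ≫ v')) ∧
    (∀ g : Y ⟶ Y', IsTriMap (Triangle.mk u v w) (Triangle.mk u' v' w') 0 g 0 →
      (IsNullHomotopic (Triangle.mk u v w) (Triangle.mk u' v' w') 0 g 0 ↔ ∃ θ : Z ⟶ X', g = v ≫ θ ≫ u')) ∧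
    (∀ f : X ⟶ X', IsTriMap (Triangle.mk u v w) (Triangle.mk u' v' w') f 0 0 →
      (IsNullHomotopic (Triangle.mk u v w) (Triangle.mk u' v' w') f 0 0 ↔
        ∃ θ : Y⟦(1 : ℤ)⟧ ⟶ Z', f⟦(1 : ℤ)⟧' = u⟦(1 : ℤ)⟧' ≫ θ ≫ w')) := by
  have huv : u ≫ v = 0 := comp_distTriang_mor_zero₁₂ _ hT
  have hvw : v ≫ w = 0 := comp_distTriang_mor_zero₂₃ _ hT
  have hwu : w ≫ u⟦(1 : ℤ)⟧' = 0 := comp_distTriang_mor_zero₃₁ _ hT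
  have hu'v' : u' ≫ v' = 0 := comp_distTriang_mor_zero₁₂ _ hT'
  have hv'w' : v' ≫ w' = 0 := comp_distTriang_mor_zero₂₃ _ hT'
  have hw'u' : w' ≫ u'⟦(1 : ℤ)⟧' = 0 := comp_distTriang_mor_zero₃₁ _ hT'
  refine ⟨fun h _ => ⟨?_, ?_⟩, fun g _ => ⟨?_, ?_⟩, fun f _ => ⟨?_, ?_⟩⟩
  -- (i) forward
  · intro hN
    obtain ⟨F, G, H, e1, e2, e3⟩ : ∃ (F : Y ⟶ X') (G : Z ⟶ Y') (H : X⟦(1 : ℤ)⟧ ⟶ Z'),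
        (0 : X ⟶ X')⟦(1 : ℤ)⟧' = u⟦(1 : ℤ)⟧' ≫ F⟦(1 : ℤ)⟧' + H ≫ w' ∧ (0 : Y ⟶ Y') = v ≫ G + F ≫ u' ∧ h = w ≫ H + G ≫ v' := hN
    rw [Functor.map_zero] at e1
    obtain ⟨c, hc1, hc2⟩ : ∃ c : Z⟦(1 : ℤ)⟧ ⟶ Y'⟦(1 : ℤ)⟧, (-v⟦(1 : ℤ)⟧') ≫ c = F⟦(1 : ℤ)⟧' ≫ (-u'⟦(1 : ℤ)⟧') ∧ (-w⟦(1 : ℤ)⟧') ≫ H⟦(1 : ℤ)⟧' = c ≫ (-v'⟦(1 : ℤ)⟧') := complete_distinguished_triangle_morphism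
      (Triangle.mk u v w).rotate.rotate.rotate (Triangle.mk u' v' w').rotate.rotate
      (rot_of_distTriang _ (rot_of_distTriang _ (rot_of_distTriang _ hT)))
      (rot_of_distTriang _ (rot_of_distTriang _ hT'))
      H (F⟦(1 : ℤ)⟧') (by
        change (-u⟦(1 : ℤ)⟧') ≫ F⟦(1 : ℤ)⟧' = H ≫ w'
        rw [Preadditive.neg_comp, eq_neg_of_add_eq_zero_right e1.symm])
    rw [Preadditive.neg_comp, Preadditive.comp_neg, neg_inj] at hc1
    rw [Preadditive.neg_comp, Preadditive.comp_neg, neg_inj] at hc2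
    let L : Z ⟶ Y' := (shiftFunctor C (1 : ℤ)).preimage c
    have hLc : L⟦(1 : ℤ)⟧' = c := (shiftFunctor C (1 : ℤ)).map_preimage c
    have hvL : v ≫ L = F ≫ u' := (shiftFunctor C (1 : ℤ)).map_injective (by
      rw [Functor.map_comp, Functor.map_comp, hLc]; exact hc1)
    have hwH : w ≫ H = L ≫ v' := (shiftFunctor C (1 : ℤ)).map_injective (by
      rw [Functor.map_comp, Functor.map_comp, hLc]; exact hc2)
    have hv0 : v ≫ (L + G) = 0 := by
      rw [Preadditive.comp_add, hvL]
      exact (add_comm _ _).trans e2.symm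
    obtain ⟨θ, hθ⟩ : ∃ θ : X⟦(1 : ℤ)⟧ ⟶ Y', L + G = w ≫ θ := Triangle.yoneda_exact₃ _ hT (L + G) hv0
    have hθ' : L + G = w ≫ θ := hθ
    refine ⟨θ, ?_⟩
    rw [e3, hwH, ← Preadditive.add_comp, hθ', assoc]
  -- (i) backward
  · rintro ⟨θ, rfl⟩
    refine ⟨0, 0, θ ≫ v', ?_, ?_, ?_⟩
    · simp [hv'w']
      exact (by simp [hv'w'] : (θ ≫ v') ≫ w' = 0).symm
    · simp
      exact (by simp : v ≫ (0 : Z ⟶ Y') + (0 : Y ⟶ X') ≫ u' = 0).symm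
    · simp
      exact (by simp : w ≫ θ ≫ v' + (0 : Z ⟶ Y') ≫ v' = w ≫ θ ≫ v').symm
  -- (ii) forward
  · intro hN
    obtain ⟨F, G, H, e1, e2, e3⟩ : ∃ (F : Y ⟶ X') (G : Z ⟶ Y') (H : X⟦(1 : ℤ)⟧ ⟶ Z'),
        (0 : X ⟶ X')⟦(1 : ℤ)⟧' = u⟦(1 : ℤ)⟧' ≫ F⟦(1 : ℤ)⟧' + H ≫ w' ∧ g = v ≫ G + F ≫ u' ∧ (0 : Z ⟶ Z') = w ≫ H + G ≫ v' := hN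
    rw [Functor.map_zero] at e1
    obtain ⟨c, hc1, hc2⟩ : ∃ c : Y⟦(1 : ℤ)⟧ ⟶ X'⟦(1 : ℤ)⟧, (-u⟦(1 : ℤ)⟧') ≫ c = (-H) ≫ w' ∧ (-v⟦(1 : ℤ)⟧') ≫ G⟦(1 : ℤ)⟧' = c ≫ (-u'⟦(1 : ℤ)⟧') := complete_distinguished_triangle_morphism
      (Triangle.mk u v w).rotate.rotate (Triangle.mk u' v' w').rotate
      (rot_of_distTriang _ (rot_of_distTriang _ hT)) (rot_of_distTriang _ hT')
      G (-H) (by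
        change w ≫ (-H) = G ≫ v'
        rw [Preadditive.comp_neg, eq_neg_of_add_eq_zero_right e3.symm])
    rw [Preadditive.neg_comp, Preadditive.neg_comp, neg_inj] at hc1
    rw [Preadditive.neg_comp, Preadditive.comp_neg, neg_inj] at hc2
    let M : Y ⟶ X' := (shiftFunctor C (1 : ℤ)).preimage c
    have hMc : M⟦(1 : ℤ)⟧' = c := (shiftFunctor C (1 : ℤ)).map_preimage c
    have h1 : u⟦(1 : ℤ)⟧' ≫ c = -(u⟦(1 : ℤ)⟧' ≫ F⟦(1 : ℤ)⟧') :=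
      hc1.trans (eq_neg_of_add_eq_zero_right e1.symm)
    have h2 : u ≫ (M + F) = 0 := (shiftFunctor C (1 : ℤ)).map_injective (by
      rw [Functor.map_comp, Functor.map_add, Preadditive.comp_add, hMc, h1, Functor.map_zero]
      abel)
    have hvG : v ≫ G = M ≫ u' := (shiftFunctor C (1 : ℤ)).map_injective (by
      rw [Functor.map_comp, Functor.map_comp, hMc]; exact hc2)
    obtain ⟨θ, hθ⟩ : ∃ θ : Z ⟶ X', M + F = v ≫ θ := Triangle.yoneda_exact₂ _ hT (M + F) h2
    have hθ' : M + F = v ≫ θ := hθ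
    refine ⟨θ, ?_⟩
    rw [e2, hvG, ← Preadditive.add_comp, hθ', assoc]
  -- (ii) backward
  · rintro ⟨θ, rfl⟩
    refine ⟨0, θ ≫ u', 0, ?_, ?_, ?_⟩
    · simp
      exact zero_comp.symm
    · simp
      exact (by simp : v ≫ θ ≫ u' + (0 : Y ⟶ X') ≫ u' = v ≫ θ ≫ u').symm
    · simp [hu'v']
      exact (by simp [hu'v'] : w ≫ (0 : X⟦(1 : ℤ)⟧ ⟶ Z') + (θ ≫ u') ≫ v' = 0).symm
  -- (iii) forward
  · intro hN
    obtain ⟨F, G, H, e1, e2, e3⟩ : ∃ (F : Y ⟶ X') (G : Z ⟶ Y') (H : X⟦(1 : ℤ)⟧ ⟶ Z'),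
        f⟦(1 : ℤ)⟧' = u⟦(1 : ℤ)⟧' ≫ F⟦(1 : ℤ)⟧' + H ≫ w' ∧ (0 : Y ⟶ Y') = v ≫ G + F ≫ u' ∧ (0 : Z ⟶ Z') = w ≫ H + G ≫ v' := hN
    obtain ⟨c, hc1, hc2⟩ : ∃ c : X⟦(1 : ℤ)⟧ ⟶ Z', w ≫ c = (-G) ≫ v' ∧ (-u⟦(1 : ℤ)⟧') ≫ F⟦(1 : ℤ)⟧' = c ≫ w' := complete_distinguished_triangle_morphism
      (Triangle.mk u v w).rotate (Triangle.mk u' v' w')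
      (rot_of_distTriang _ hT) hT'
      F (-G) (by
        change v ≫ (-G) = F ≫ u'
        rw [Preadditive.comp_neg, eq_neg_of_add_eq_zero_right e2.symm])
    rw [Preadditive.neg_comp] at hc1
    rw [Preadditive.neg_comp] at hc2
    let c₀ : X⟦(1 : ℤ)⟧ ⟶ Z' := c
    have hc1₀ : w ≫ c₀ = -(G ≫ v') := hc1
    have hc2₀ : -(u⟦(1 : ℤ)⟧' ≫ F⟦(1 : ℤ)⟧') = c₀ ≫ w' := hc2
    have hwH : w ≫ H = -(G ≫ v') := eq_neg_of_add_eq_zero_left e3.symm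
    have hw0 : w ≫ (H - c₀) = 0 := by
      rw [Preadditive.comp_sub, hwH, hc1₀, sub_self]
    obtain ⟨θ₀, hθ₀⟩ : ∃ θ₀ : Y⟦(1 : ℤ)⟧ ⟶ Z', H - c₀ = (-u⟦(1 : ℤ)⟧') ≫ θ₀ := Triangle.yoneda_exact₃ _ (rot_of_distTriang _ hT) (H - c₀) hw0
    have hθ₀' : H - c₀ = -(u⟦(1 : ℤ)⟧' ≫ θ₀) := by
      rw [hθ₀]; rw [Preadditive.neg_comp]
    refine ⟨-θ₀, ?_⟩
    have hc2' : u⟦(1 : ℤ)⟧' ≫ F⟦(1 : ℤ)⟧' = -(c₀ ≫ w') := neg_eq_iff_eq_neg.mp hc2₀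
    calc f⟦(1 : ℤ)⟧' = u⟦(1 : ℤ)⟧' ≫ F⟦(1 : ℤ)⟧' + H ≫ w' := e1
      _ = -(c₀ ≫ w') + H ≫ w' := by rw [hc2']
      _ = (H - c₀) ≫ w' := by rw [Preadditive.sub_comp]; abel
      _ = -(u⟦(1 : ℤ)⟧' ≫ θ₀) ≫ w' := by rw [hθ₀']; simp
      _ = u⟦(1 : ℤ)⟧' ≫ (-θ₀) ≫ w' := by simp
  -- (iii) backward
  · rintro ⟨θ, hθ⟩
    refine ⟨0, 0, u⟦(1 : ℤ)⟧' ≫ θ, ?_, ?_, ?_⟩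
    · simp [hθ]
      exact hθ.trans (assoc _ _ _).symm
    · simp
      exact (by simp : v ≫ (0 : Z ⟶ Y') + (0 : Y ⟶ X') ≫ u' = 0).symm
    · simp [reassoc_of% hwu]
      exact (by simp [reassoc_of% hwu] : w ≫ u⟦(1 : ℤ)⟧' ≫ θ + (0 : Z ⟶ Y') ≫ v' = 0).symm
end
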